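/- arXiv:1909.04563 — 2 statements merged into one kernel-verified Lean document; each statement's English description precedes it below -/
import Mathlib

section
/- Fix c ∈ (0,∞) and K > 0, and let μ be a probability measure on ℝ whose cumulative distribution function G has exponential tail rate c. For each n ≥ 2, let N_n = ⌈3K·log n⌉ and let X_1^{(n)}, …, X_{N_n}^{(n)} be i.i.d. random variables with law μ on some probability space. Then n·P(#{i ≤ N_n : X_i^{(n)} ≥ √(log n)} ≥ (K·log n)/2) → 0 as n → ∞. -/
/-!
A union bound over the `⌈K log n / 2⌉`-element sets of indices, together with independence,
bounds the probability by `2 ^ N_n · μ[√(log n), ∞) ^ (K log n / 2)`. The tail rate gives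
`μ[t, ∞) ≤ exp (-(c / 2) (t - 1))` for large `t`, so `n` times the probability is at most
`exp (O(log n) - (c K / 4) (log n) ^ (3 / 2))`, which tends to `0`.
-/

open MeasureTheory ProbabilityTheory Filter Real

theorem ProbabilityTheory.iIndepFun.measure_le_card_filter_mem_le_choose_mul_pow
    {Ω ι β : Type*} [MeasurableSpace Ω] [MeasurableSpace β] [Fintype ι]
    {P : Measure Ω} {ν : Measure β} {X : ι → Ω → β} (hindep : iIndepFun X P)
    (hX : ∀ i, AEMeasurable (X i) P) (hlaw : ∀ i, P.map (X i) = ν)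
    {s : Set β} [DecidablePred (· ∈ s)] (hs : MeasurableSet s) (m : ℕ) :
    P {ω | m ≤ (Finset.univ.filter fun i => X i ω ∈ s).card} ≤
      (Fintype.card ι).choose m * ν s ^ m := by
  have hcover : {ω | m ≤ (Finset.univ.filter fun i => X i ω ∈ s).card} ⊆
      ⋃ S ∈ Finset.univ.powersetCard m, ⋂ i ∈ S, X i ⁻¹' s := by
    intro ω hω
    obtain ⟨S, hS, hScard⟩ := Finset.exists_subset_card_eq hω
    exact Set.mem_biUnion (Finset.mem_powersetCard.2 ⟨Finset.subset_univ _, hScard⟩)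
      (Set.mem_iInter₂.2 fun i hi => (Finset.mem_filter.1 (hS hi)).2)
  have hinter : ∀ S ∈ Finset.univ.powersetCard m, P (⋂ i ∈ S, X i ⁻¹' s) = ν s ^ m := by
    intro S hS
    rw [hindep.meas_biInter fun i _ => ⟨s, hs, rfl⟩, ← (Finset.mem_powersetCard.1 hS).2,
      ← Finset.prod_const]
    refine Finset.prod_congr rfl fun i _ => ?_
    rw [← hlaw i, Measure.map_apply_of_aemeasurable (hX i) hs]
  calc P _ ≤ ∑ S ∈ Finset.univ.powersetCard m, P (⋂ i ∈ S, X i ⁻¹' s) :=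
        (measure_mono hcover).trans (measure_biUnion_finset_le _ _)
    _ = _ := by
      rw [Finset.sum_congr rfl hinter, Finset.sum_const, Finset.card_powersetCard,
        Finset.card_univ, nsmul_eq_mul]

theorem ProbabilityTheory.iIndepFun.measureReal_le_card_filter_le_exp
    {Ω ι : Type*} [MeasurableSpace Ω] [Fintype ι] {P : Measure Ω} {μ : Measure ℝ}
    [IsFiniteMeasure μ] {X : ι → Ω → ℝ} (hindep : iIndepFun X P)
    (hX : ∀ i, AEMeasurable (X i) P) (hlaw : ∀ i, P.map (X i) = μ)
    {t q : ℝ} (hq : 0 ≤ q) (ht : μ.real (Set.Ici t) ≤ exp (-q)) (a : ℝ) :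
    P.real {ω | a ≤ ((Finset.univ.filter fun i => t ≤ X i ω).card : ℝ)} ≤
      exp (Fintype.card ι * log 2 - q * a) := by
  set m := ⌈a⌉₊
  have hevent : {ω | a ≤ ((Finset.univ.filter fun i => t ≤ X i ω).card : ℝ)} =
      {ω | m ≤ (Finset.univ.filter fun i => X i ω ∈ Set.Ici t).card} := by
    ext ω
    simp only [Set.mem_ofPred_eq, Set.mem_Ici, Nat.ceil_le, m]
  have hchoose : ((Fintype.card ι).choose m : ℝ) ≤ exp (log 2) ^ Fintype.card ι := by
    rw [exp_log two_pos]
    exact_mod_cast Nat.choose_le_two_pow _ _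
  calc P.real _ ≤ (Fintype.card ι).choose m * μ.real (Set.Ici t) ^ m := by
        rw [hevent]
        simpa [measureReal_def] using
          ENNReal.toReal_mono (by simp [ENNReal.mul_eq_top, measure_ne_top])
            (hindep.measure_le_card_filter_mem_le_choose_mul_pow hX hlaw measurableSet_Ici m)
    _ ≤ exp (log 2) ^ Fintype.card ι * exp (-q) ^ m := by gcongr
    _ = exp (Fintype.card ι * log 2 - q * m) := by
        rw [← exp_nat_mul, ← exp_nat_mul, ← exp_add]
        ring_nf
    _ ≤ exp (Fintype.card ι * log 2 - q * a) := by
        gcongr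
        exact Nat.le_ceil a

theorem eventually_le_exp_neg_mul_of_tendsto_neg_log_div {g : ℝ → ℝ} {c c' : ℝ}
    (hg : Tendsto (fun x => -log (g x) / x) atTop (nhds c)) (hc' : c' < c) :
    ∀ᶠ x in atTop, g x ≤ exp (-(c' * x)) := by
  filter_upwards [hg.eventually (eventually_ge_nhds hc'), eventually_gt_atTop 0]
    with x hx hx0
  rcases le_or_gt (g x) 0 with hg0 | hg0
  · exact hg0.trans (exp_pos _).le
  · rw [le_div_iff₀ hx0] at hx
    rw [← exp_log hg0]
    exact exp_le_exp.2 (by linarith)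

theorem eventually_measureReal_Ici_le_exp {μ : Measure ℝ} [IsFiniteMeasure μ] {c c' : ℝ}
    (htail : Tendsto (fun x => -log (μ.real (Set.Ioi x)) / x) atTop (nhds c)) (hc' : c' < c) :
    ∀ᶠ x in atTop, μ.real (Set.Ici x) ≤ exp (-(c' * (x - 1))) := by
  filter_upwards [(tendsto_atTop_add_const_right _ (-1) tendsto_id).eventually
    (eventually_le_exp_neg_mul_of_tendsto_neg_log_div htail hc')] with x hx
  rw [← sub_eq_add_neg] at hx
  exact (measureReal_mono (Set.Ici_subset_Ioi.2 (sub_one_lt x))).trans hx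

theorem tendsto_mul_add_sub_mul_mul_sqrt_atBot (A C : ℝ) {B : ℝ} (hB : 0 < B) :
    Tendsto (fun L => A * L + C - B * L * √L) atTop atBot := by
  have h : Tendsto (fun L => L * (A - B * √L)) atTop atBot :=
    tendsto_id.atTop_mul_atBot₀ <| tendsto_atBot_add_const_left _ A <|
      tendsto_neg_atTop_atBot.comp (tendsto_sqrt_atTop.const_mul_atTop hB)
  exact (tendsto_atBot_add_const_right _ C h).congr fun L => by ring

theorem many_large_weights_unlikely_general
    (c : ℝ) (hc : 0 < c) (K : ℝ) (hK : 0 < K)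
    (μ : Measure ℝ) [IsProbabilityMeasure μ] (G : ℝ → ℝ)
    (hG : ∀ x, G x = (μ (Set.Iic x)).toReal)
    (htail : Tendsto (fun x => -Real.log (1 - G x) / x) atTop (nhds c))
    (N : ℕ → ℕ) (hNdef : ∀ n, N n = ⌈3 * K * Real.log n⌉₊)
    (Ω : ℕ → Type*) [∀ n, MeasurableSpace (Ω n)]
    (P : ∀ n, Measure (Ω n))
    (X : ∀ n, Fin (N n) → Ω n → ℝ)
    (hindep : ∀ n, 2 ≤ n → iIndepFun (X n) (P n))
    (hXlaw : ∀ n, 2 ≤ n → ∀ i, Measure.map (X n i) (P n) = μ) :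
    Tendsto
      (fun n : ℕ =>
        (n : ℝ) *
          ((P n) {ω | K * Real.log n / 2 ≤
            ((Finset.univ.filter fun i => Real.sqrt (Real.log n) ≤ X n i ω).card : ℝ)}).toReal)
      atTop (nhds 0) := by
  -- `Measure.map` of a non-a.e.-measurable function is `0`, which `μ` is not.
  have hX : ∀ n, 2 ≤ n → ∀ i, AEMeasurable (X n i) (P n) := fun n hn i =>
    .of_map_ne_zero (by rw [hXlaw n hn i]; exact IsProbabilityMeasure.ne_zero μ)
  have hsurvival : ∀ x, 1 - G x = μ.real (Set.Ioi x) := fun x => by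
    rw [hG, ← Set.compl_Iic, probReal_compl_eq_one_sub measurableSet_Iic]; rfl
  simp only [hsurvival] at htail
  have hlog : Tendsto (fun n : ℕ => log n) atTop atTop :=
    tendsto_log_atTop.comp tendsto_natCast_atTop_atTop
  have hsqrt := tendsto_sqrt_atTop.comp hlog
  have hbound : ∀ᶠ n : ℕ in atTop,
      (n : ℝ) * ((P n) {ω | K * log n / 2 ≤
        ((Finset.univ.filter fun i => √(log n) ≤ X n i ω).card : ℝ)}).toReal ≤
      exp ((1 + 3 * K * log 2 + c * K / 4) * log n + log 2 - c * K / 4 * log n * √(log n)) := by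
    filter_upwards [eventually_ge_atTop 2, hsqrt.eventually_ge_atTop 1,
      hsqrt.eventually (eventually_measureReal_Ici_le_exp htail (half_lt_self hc))]
      with n hn hsqrt_one htail_n
    have hN : (N n : ℝ) ≤ 3 * K * log n + 1 :=
      hNdef n ▸ (Nat.ceil_lt_add_one (by positivity)).le
    calc (n : ℝ) * _ ≤ exp (log n) *
          exp (N n * log 2 - c / 2 * (√(log n) - 1) * (K * log n / 2)) := by
          rw [exp_log (by positivity)]
          gcongr
          have h := (hindep n hn).measureReal_le_card_filter_le_exp (hX n hn) (hXlaw n hn)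
            (mul_nonneg (by positivity) (by linarith)) htail_n (K * log n / 2)
          rwa [Fintype.card_fin] at h
      _ ≤ exp (log n + ((3 * K * log n + 1) * log 2 -
          c / 2 * (√(log n) - 1) * (K * log n / 2))) := by
          rw [← exp_add]
          gcongr
      _ = _ := by ring_nf
  exact squeeze_zero' (.of_forall fun n => by positivity) hbound <| tendsto_exp_atBot.comp <|
    (tendsto_mul_add_sub_mul_mul_sqrt_atBot _ _ (by positivity)).comp hlog

/-- Fix `c ∈ (0,∞)`, `K > 0` and a probability measure `μ` on `ℝ` whose cdf `G` has
exponential tail rate `c`. For each `n`, let `N_n = ⌈3 K log n⌉` and let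
`X_1^{(n)}, …, X_{N_n}^{(n)}` be i.i.d. with law `μ` on a probability space `(Ω_n, P_n)`.
Then `n · P_n(#{i : X_i^{(n)} ≥ √(log n)} ≥ K log n / 2) → 0` as `n → ∞`. -/
theorem many_large_weights_unlikely
    (c : ℝ) (hc : 0 < c) (K : ℝ) (hK : 0 < K)
    (μ : Measure ℝ) [IsProbabilityMeasure μ] (G : ℝ → ℝ)
    (hG : ∀ x, G x = (μ (Set.Iic x)).toReal)
    (htail : Tendsto (fun x => -Real.log (1 - G x) / x) atTop (nhds c))
    (N : ℕ → ℕ) (hNdef : ∀ n, N n = ⌈3 * K * Real.log n⌉₊)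
    (Ω : ℕ → Type*) [∀ n, MeasurableSpace (Ω n)]
    (P : ∀ n, Measure (Ω n)) (hP : ∀ n, IsProbabilityMeasure (P n))
    (X : ∀ n, Fin (N n) → Ω n → ℝ) (hXm : ∀ n i, Measurable (X n i))
    (hindep : ∀ n, 2 ≤ n → iIndepFun (X n) (P n))
    (hXlaw : ∀ n, 2 ≤ n → ∀ i, Measure.map (X n i) (P n) = μ) :
    Tendsto
      (fun n : ℕ =>
        (n : ℝ) *
          ((P n) {ω | K * Real.log n / 2 ≤
            ((Finset.univ.filter fun i => Real.sqrt (Real.log n) ≤ X n i ω).card : ℝ)}).toReal)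
      atTop (nhds 0) :=
  many_large_weights_unlikely_general c hc K hK μ G hG htail N hNdef Ω P X hindep hXlaw
end

section
/- Let (Ω, P) be a probability space, V a finite set, (A_v)_{v∈V} a family of events, and suppose there is a map N assigning to each v ∈ V a finite set N(v) ⊆ V with cardinality at most d, such that for all u, v ∈ V with v ≠ u and v ∉ N(u), the events A_u and A_v are independent. Let Y = ∑_{v∈V} 1_{A_v}. Then Var(Y) ≤ (d+1)·∑_{v∈V} P(A_v) = (d+1)·E[Y]. -/
/-!
Expand `Var Y` as `∑ u, ∑ v, Cov(1_{A u}, 1_{A v})`. Each covariance equals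
`P(A u ∩ A v) - P(A u) P(A v)`, so it is at most `P(A u)`, and it vanishes unless `v` lies in
`insert u (N u)`, a set of at most `d + 1` elements; hence row `u` contributes at most
`(d + 1) P(A u)`.
-/

open MeasureTheory ProbabilityTheory Finset

section IndicatorCovariance

variable {Ω : Type*} [MeasurableSpace Ω] {μ : Measure Ω} {A B : Set Ω}

lemma memLp_indicator_one [IsFiniteMeasure μ] (p : ENNReal) (hA : MeasurableSet A) :
    MemLp (A.indicator (1 : Ω → ℝ)) p μ :=
  memLp_indicator_const p hA 1 (Or.inr (measure_ne_top μ A))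

lemma covariance_indicator_one [IsProbabilityMeasure μ] (hA : MeasurableSet A)
    (hB : MeasurableSet B) :
    cov[A.indicator 1, B.indicator 1; μ] = μ.real (A ∩ B) - μ.real A * μ.real B := by
  rw [covariance_eq_sub (memLp_indicator_one 2 hA) (memLp_indicator_one 2 hB),
    ← Set.inter_indicator_one, integral_indicator_one (hA.inter hB), integral_indicator_one hA,
    integral_indicator_one hB]

lemma covariance_indicator_one_le [IsProbabilityMeasure μ] (hA : MeasurableSet A)
    (hB : MeasurableSet B) : cov[A.indicator 1, B.indicator 1; μ] ≤ μ.real A := by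
  rw [covariance_indicator_one hA hB]
  have hinter : μ.real (A ∩ B) ≤ μ.real A := measureReal_mono Set.inter_subset_left
  have hprod : 0 ≤ μ.real A * μ.real B := by positivity
  linarith

lemma covariance_indicator_one_eq_zero [IsProbabilityMeasure μ] (hA : MeasurableSet A)
    (hB : MeasurableSet B) (hAB : μ (A ∩ B) = μ A * μ B) :
    cov[A.indicator 1, B.indicator 1; μ] = 0 := by
  rw [covariance_indicator_one hA hB, measureReal_def, hAB, ENNReal.toReal_mul]
  simp [measureReal_def]

end IndicatorCovariance

lemma Finset.sum_le_card_mul_of_eq_zero_off {V : Type*} [Fintype V] {f : V → ℝ} {s : Finset V}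
    {c : ℝ} (hzero : ∀ v ∉ s, f v = 0) (hle : ∀ v ∈ s, f v ≤ c) : ∑ v, f v ≤ #s * c := by
  rw [← sum_subset (subset_univ s) fun v _ hv => hzero v hv]
  simpa using sum_le_card_nsmul s f c hle

/-- If `(A_v)_{v ∈ V}` is a finite family of events such that `A_u` and `A_v` are
independent whenever `v ≠ u` and `v ∉ N(u)`, where each `N(u)` has at most `d` elements,
then `Y = ∑_v 1_{A_v}` satisfies `Var(Y) ≤ (d+1) ∑_v P(A_v) = (d+1) E[Y]`. -/
theorem variance_sum_indicators_local_dependence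
    {Ω : Type*} [MeasurableSpace Ω] (P : Measure Ω) [IsProbabilityMeasure P]
    {V : Type*} [Fintype V] [DecidableEq V]
    (A : V → Set Ω) (hA : ∀ v, MeasurableSet (A v))
    (d : ℕ) (N : V → Finset V) (hNd : ∀ v, (N v).card ≤ d)
    (hindep : ∀ u v, v ≠ u → v ∉ N u → P (A u ∩ A v) = P (A u) * P (A v))
    (Y : Ω → ℝ) (hY : ∀ ω, Y ω = ∑ v, (A v).indicator (fun _ => (1 : ℝ)) ω) :
    variance Y P ≤ ((d : ℝ) + 1) * ∑ v, (P (A v)).toReal ∧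
      ∑ v, (P (A v)).toReal = ∫ ω, Y ω ∂P := by
  have hY' : Y = fun ω => ∑ v, (A v).indicator 1 ω := funext hY
  have hrow : ∀ u,
      ∑ v, cov[(A u).indicator 1, (A v).indicator 1; P] ≤ (d + 1) * P.real (A u) := by
    intro u
    have hcard : (#(insert u (N u)) : ℝ) ≤ d + 1 := by
      exact_mod_cast (card_insert_le u (N u)).trans (Nat.succ_le_succ (hNd u))
    calc ∑ v, cov[(A u).indicator 1, (A v).indicator 1; P]
        ≤ #(insert u (N u)) * P.real (A u) :=
          sum_le_card_mul_of_eq_zero_off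
            (fun v hv => by
              rw [mem_insert, not_or] at hv
              exact covariance_indicator_one_eq_zero (hA u) (hA v) (hindep u v hv.1 hv.2))
            fun v _ => covariance_indicator_one_le (hA u) (hA v)
      _ ≤ (d + 1) * P.real (A u) := by gcongr
  constructor
  · calc variance Y P = ∑ u, ∑ v, cov[(A u).indicator 1, (A v).indicator 1; P] := by
          rw [hY', variance_fun_sum fun v => memLp_indicator_one 2 (hA v)]
      _ ≤ ∑ u, (d + 1) * P.real (A u) := sum_le_sum fun u _ => hrow u
      _ = _ := by simp_rw [← mul_sum, measureReal_def]
  · rw [hY', integral_finsetSum _ fun v _ => (memLp_indicator_one 1 (hA v)).integrable le_rfl]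
    simp_rw [integral_indicator_one (hA _), measureReal_def]
end
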